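/- arXiv:1509.01099 — 2 statements merged into one kernel-verified Lean document; each statement's English description precedes it below -/
import Mathlib

section
/- Gale–Stewart theorem: For any set X of moves and any open set A ⊆ X^ω (in the product topology where X is discrete), the two-player perfect-information game of length ω with payoff set A (player I wins iff the resulting play lies in A) is determined: one of the two players has a winning strategy. -/
universe u

/-- The first `n` moves of the play `a`, as a finite position. -/
def prefixOf {X : Type u} (a : ℕ → X) (n : ℕ) : List X :=
  List.ofFn (fun i : Fin n => a i)

/-- The play `a` follows the strategy `σ` for player I, who moves at even stages. -/
def FollowsI {X : Type u} (σ : List X → X) (a : ℕ → X) : Prop :=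
  ∀ n, Even n → a n = σ (prefixOf a n)

/-- The play `a` follows the strategy `τ` for player II, who moves at odd stages. -/
def FollowsII {X : Type u} (τ : List X → X) (a : ℕ → X) : Prop :=
  ∀ n, Odd n → a n = τ (prefixOf a n)

/-- `σ` is a winning strategy for player I in the game with payoff set `A`. -/
def WinningI {X : Type u} (A : Set (ℕ → X)) (σ : List X → X) : Prop :=
  ∀ a, FollowsI σ a → a ∈ A

/-- `τ` is a winning strategy for player II in the game with payoff set `A`. -/
def WinningII {X : Type u} (A : Set (ℕ → X)) (τ : List X → X) : Prop :=
  ∀ a, FollowsII τ a → a ∉ A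

/-- The game with payoff set `A` is determined. -/
def Determined {X : Type u} (A : Set (ℕ → X)) : Prop :=
  (∃ σ, WinningI A σ) ∨ (∃ τ, WinningII A τ)

/-- `A` is open: every play in `A` has a finite initial segment all of whose
extensions lie in `A`. -/
def IsOpenPayoff {X : Type u} (A : Set (ℕ → X)) : Prop :=
  ∀ a ∈ A, ∃ n : ℕ, ∀ b : ℕ → X, (∀ i < n, b i = a i) → b ∈ A

/-- The play `a` extends the finite position `p`. -/
def Extends {X : Type u} (p : List X) (a : ℕ → X) : Prop :=
  prefixOf a p.length = p

/-- `σ` is a winning strategy for player I in the game with payoff `A`, proceeding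
from position `p`. -/
def WinningFromI {X : Type u} (A : Set (ℕ → X)) (p : List X) (σ : List X → X) : Prop :=
  ∀ a : ℕ → X, Extends p a →
    (∀ n, p.length ≤ n → Even n → a n = σ (prefixOf a n)) → a ∈ A

/-- `τ` is a winning strategy for player II in the game with payoff `A`, proceeding
from position `p`. -/
def WinningFromII {X : Type u} (A : Set (ℕ → X)) (p : List X) (τ : List X → X) : Prop :=
  ∀ a : ℕ → X, Extends p a →
    (∀ n, p.length ≤ n → Odd n → a n = τ (prefixOf a n)) → a ∉ A

/-
Call a position winning for I if I has a winning strategy proceeding from it. If it is I's turn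
and some move leads to a winning position, the position is winning; if every move leads to a
winning position, it is winning too. So if the empty position is not winning for I, player II can always
move to a position that is not winning for I. Along the resulting play no initial segment is
winning for I; but if the play were in the open set `A`, some initial segment would have all its
extensions in `A`, and any strategy for I would win from it.
-/

section

variable {X : Type u}

lemma length_prefixOf (a : ℕ → X) (n : ℕ) : (prefixOf a n).length = n := by
  simp [prefixOf]

lemma prefixOf_succ (a : ℕ → X) (n : ℕ) : prefixOf a (n + 1) = prefixOf a n ++ [a n] := by
  simp only [prefixOf, List.ofFn_succ_last, Fin.val_castSucc, Fin.val_last]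

lemma getD_prefixOf (a : ℕ → X) {n i : ℕ} (h : i < n) (d : X) :
    (prefixOf a n).getD i d = a i := by
  simp [prefixOf, h]

lemma extends_prefixOf_iff {a b : ℕ → X} {n : ℕ} :
    Extends (prefixOf a n) b ↔ ∀ i < n, b i = a i := by
  rw [Extends, length_prefixOf]
  simp only [prefixOf, List.ofFn_inj, funext_iff, Fin.forall_iff]

lemma Extends.append_singleton {p : List X} {a : ℕ → X} (h : Extends p a) :
    Extends (p ++ [a p.length]) a := by
  rw [Extends, List.length_append, List.length_singleton, prefixOf_succ, h]

def IsWinningPositionI (A : Set (ℕ → X)) (p : List X) : Prop :=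
  ∃ σ, WinningFromI A p σ

lemma isWinningPositionI_of_forall_extends [Nonempty X] {A : Set (ℕ → X)} {p : List X}
    (h : ∀ a, Extends p a → a ∈ A) : IsWinningPositionI A p :=
  ⟨fun _ => Classical.arbitrary X, fun a ha _ => h a ha⟩

lemma IsWinningPositionI.winningI {A : Set (ℕ → X)} (h : IsWinningPositionI A []) :
    ∃ σ, WinningI A σ :=
  let ⟨σ, hσ⟩ := h
  ⟨σ, fun a ha => hσ a rfl fun n _ => ha n⟩

lemma IsWinningPositionI.of_append_singleton {A : Set (ℕ → X)} {p : List X} {x : X}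
    (hp : Even p.length) (h : IsWinningPositionI A (p ++ [x])) : IsWinningPositionI A p := by
  classical
  obtain ⟨σ, hσ⟩ := h
  refine ⟨fun q => if q = p then x else σ q, fun a ha hfol => ?_⟩
  have hx : a p.length = x := by
    simpa [show prefixOf a p.length = p from ha] using hfol p.length le_rfl hp
  refine hσ a (hx ▸ ha.append_singleton) fun n hn he => ?_
  have hne : prefixOf a n ≠ p := by
    intro hq
    have := congrArg List.length hq
    simp only [length_prefixOf, List.length_append, List.length_singleton] at this hn
    omega
  simpa [hne] using hfol n (by simp at hn; omega) he

lemma IsWinningPositionI.of_forall_append_singleton [Nonempty X] {A : Set (ℕ → X)}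
    {p : List X} (h : ∀ x, IsWinningPositionI A (p ++ [x])) :
    IsWinningPositionI A p := by
  choose σ hσ using h
  -- Once II has played `x` at `p`, I follows the strategy `σ x`.
  refine ⟨fun q => σ (q.getD p.length (Classical.arbitrary X)) q, fun a ha hfol => ?_⟩
  refine hσ _ a ha.append_singleton fun n hn he => ?_
  simp only [List.length_append, List.length_singleton] at hn
  rw [hfol n (by omega) he]
  exact congrArg (σ · _) (getD_prefixOf a (by omega) _)

noncomputable def nonlosingStrategyII [Nonempty X] (A : Set (ℕ → X)) (p : List X) : X :=
  open Classical in
  if h : ∃ x, ¬ IsWinningPositionI A (p ++ [x]) then h.choose else Classical.arbitrary X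

lemma not_isWinningPositionI_prefixOf [Nonempty X] {A : Set (ℕ → X)}
    (h₀ : ¬ IsWinningPositionI A []) {a : ℕ → X} (ha : FollowsII (nonlosingStrategyII A) a)
    (n : ℕ) : ¬ IsWinningPositionI A (prefixOf a n) := by
  induction n with
  | zero => simpa [prefixOf] using h₀
  | succ n ih =>
    rw [prefixOf_succ]
    rcases Nat.even_or_odd n with he | ho
    · exact fun hw => ih (hw.of_append_singleton (by rwa [length_prefixOf]))
    · have hex : ∃ x, ¬ IsWinningPositionI A (prefixOf a n ++ [x]) := by
        by_contra! hall
        exact ih (.of_forall_append_singleton hall)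
      rw [ha n ho, nonlosingStrategyII, dif_pos hex]
      exact hex.choose_spec

lemma winningII_nonlosingStrategyII [Nonempty X] {A : Set (ℕ → X)} (hA : IsOpenPayoff A)
    (h₀ : ¬ IsWinningPositionI A []) : WinningII A (nonlosingStrategyII A) := by
  intro a ha haA
  obtain ⟨n, hn⟩ := hA a haA
  exact not_isWinningPositionI_prefixOf h₀ ha n
    (isWinningPositionI_of_forall_extends fun b hb => hn b (extends_prefixOf_iff.mp hb))

end

/-- Gale–Stewart theorem: every game with an open payoff set is determined. -/
theorem gale_stewart {X : Type u} [Nonempty X] (A : Set (ℕ → X))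
    (hA : IsOpenPayoff A) : Determined A := by
  by_cases h₀ : IsWinningPositionI A []
  · exact .inl h₀.winningI
  · exact .inr ⟨_, winningII_nonlosingStrategyII hA h₀⟩
end

section
/- In a game open for player I with payoff A ⊆ X^ω, if a position p has no ordinal game value, then player II has a winning strategy from position p. -/
universe u

/-- Auxiliary rank assignment for the ordinal game values of a game that is open
for player I (who moves at even stages): value `0` if every play extending the
position lies in `A`; at the open player's turn, `α + 1` whenever some move leads
to a position of rank `α`; at the closed player's turn, the supremum of ranks of
all one-move extensions, provided they are all defined. -/
inductive GameRank {X : Type u} (A : Set (ℕ → X)) : List X → Ordinal.{u} → Prop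
  | zero (p : List X) (h : ∀ a : ℕ → X, Extends p a → a ∈ A) : GameRank A p 0
  | succ (p : List X) (α : Ordinal.{u}) (hturn : Even p.length) (x : X)
      (h : GameRank A (p ++ [x]) α) : GameRank A p (α + 1)
  | sup (p : List X) (hturn : Odd p.length) (f : X → Ordinal.{u})
      (h : ∀ y : X, GameRank A (p ++ [y]) (f y)) : GameRank A p (⨆ y : X, f y)

/-- The position `p` has ordinal game value `α`: the least ordinal assigned to `p`
by the inductive rank assignment (so that at the open player's turn the minimal
witnessing move is taken). -/
def GameValue {X : Type u} (A : Set (ℕ → X)) (p : List X) (α : Ordinal.{u}) : Prop :=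
  GameRank A p α ∧ ∀ β : Ordinal.{u}, GameRank A p β → α ≤ β

/-! Positions without a rank are never won outright by player I, and player I cannot move out
of them, while player II can always move so as to stay in them. Hence player II wins by staying
among unranked positions forever: a play in the open set `A` would reach a position all of whose
extensions lie in `A`, and such a position has rank `0`. -/

section

variable {X : Type u}

lemma IsOpenPayoff.not_mem_of_forall_prefixOf {A : Set (ℕ → X)} (hA : IsOpenPayoff A)
    {a : ℕ → X} (m : ℕ) (h : ∀ n, m ≤ n → ∃ b, Extends (prefixOf a n) b ∧ b ∉ A) : a ∉ A := by
  intro ha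
  obtain ⟨n, hn⟩ := hA a ha
  obtain ⟨b, hb, hbA⟩ := h (max n m) (le_max_right n m)
  exact hbA (hn b fun i hi => extends_prefixOf_iff.mp hb i (lt_max_of_lt_left hi))

lemma exists_strategyII_forall_prefixOf [Nonempty X] (P : List X → Prop)
    (hI : ∀ q, Even q.length → P q → ∀ x, P (q ++ [x]))
    (hII : ∀ q, Odd q.length → P q → ∃ y, P (q ++ [y])) :
    ∃ τ : List X → X, ∀ (p : List X) (a : ℕ → X), P p → Extends p a →
      (∀ n, p.length ≤ n → Odd n → a n = τ (prefixOf a n)) →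
      ∀ n, p.length ≤ n → P (prefixOf a n) := by
  classical
  let τ : List X → X := fun q =>
    if hq : Odd q.length ∧ P q then (hII q hq.1 hq.2).choose else Classical.arbitrary X
  have hτ : ∀ q, Odd q.length → P q → P (q ++ [τ q]) := fun q hodd hq => by
    simpa only [τ, dif_pos (And.intro hodd hq)] using (hII q hodd hq).choose_spec
  refine ⟨τ, fun p a hp hext hfol n hn => ?_⟩
  induction n, hn using Nat.le_induction with
  | base => rwa [hext]
  | succ n hn ih =>
    rw [prefixOf_succ]
    rcases Nat.even_or_odd n with heven | hodd
    · exact hI _ (by rwa [length_prefixOf]) ih (a n)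
    · rw [hfol n hn hodd]
      exact hτ _ (by rwa [length_prefixOf]) ih

def Unranked (A : Set (ℕ → X)) (p : List X) : Prop :=
  ∀ α : Ordinal.{u}, ¬ GameRank A p α

variable {A : Set (ℕ → X)} {p : List X}

lemma unranked_of_forall_not_gameValue (h : ∀ α : Ordinal.{u}, ¬ GameValue A p α) :
    Unranked A p := by
  intro γ hγ
  obtain ⟨α, hα, hmin⟩ := wellFounded_lt.has_min {β : Ordinal.{u} | GameRank A p β} ⟨γ, hγ⟩
  exact h α ⟨hα, fun β hβ => not_lt.mp (hmin β hβ)⟩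

lemma Unranked.exists_extends_not_mem (hp : Unranked A p) : ∃ a, Extends p a ∧ a ∉ A := by
  by_contra! hall
  exact hp 0 (GameRank.zero p hall)

lemma Unranked.append_of_even (hp : Unranked A p) (hturn : Even p.length) (x : X) :
    Unranked A (p ++ [x]) :=
  fun α hα => hp (α + 1) (GameRank.succ p α hturn x hα)

lemma Unranked.exists_append_of_odd (hp : Unranked A p) (hturn : Odd p.length) :
    ∃ y, Unranked A (p ++ [y]) := by
  by_contra! hall
  have hranked : ∀ y, ∃ α : Ordinal.{u}, GameRank A (p ++ [y]) α := fun y => by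
    simpa [Unranked] using hall y
  choose f hf using hranked
  exact hp _ (GameRank.sup p hturn f hf)

end

/-- In a game open for player I, if a position has no ordinal game value, then
player II has a winning strategy from that position. -/
theorem winningII_of_no_gameValue {X : Type u} [Nonempty X] (A : Set (ℕ → X))
    (hA : IsOpenPayoff A) (p : List X) (h : ∀ α : Ordinal.{u}, ¬ GameValue A p α) :
    ∃ τ : List X → X, WinningFromII A p τ := by
  obtain ⟨τ, hτ⟩ := exists_strategyII_forall_prefixOf (Unranked A)
    (fun _ hturn hq x => hq.append_of_even hturn x) (fun _ hturn hq => hq.exists_append_of_odd hturn)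
  refine ⟨τ, fun a hext hfol => hA.not_mem_of_forall_prefixOf p.length fun n hn => ?_⟩
  exact (hτ p a (unranked_of_forall_not_gameValue h) hext hfol n hn).exists_extends_not_mem
end
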